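/- In the minimal counterexample (G, C_0), let f = uvw be a 3-face with d(u) = d(v) = 3 and d(w) ≤ 5, and let u' be the pendant neighbor of u (the neighbor of u not on f). If (b(f) ∪ {u'}) ∩ C_0 = ∅, then d(u') ≥ 5. -/

import Mathlib

/-!
Common definitions for formalizing "A relaxation of the Bordeaux Conjecture"
(Liu, Li, Yu).  We model a plane graph combinatorially: a simple graph together
with a set of faces (each given by its boundary cycle, a list of vertices in
cyclic order), a distinguished outer face, and, for each cycle, the sets of
vertices drawn strictly inside and strictly outside of it.

A (2,0,0)-coloring uses colors `0, 1, 2 : Fin 3`, where color `0` is the color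
of deficiency 2 (called "color 1" in the paper) and colors `1` and `2` must
induce independent sets.
-/

variable {V : Type} [Fintype V] [DecidableEq V]

/-- `l` is the list of vertices of a cycle of `G`, in cyclic order. -/
def IsCycleList (G : SimpleGraph V) (l : List V) : Prop :=
  3 ≤ l.length ∧ l.Nodup ∧ ∀ p ∈ l.zip (l.rotate 1), G.Adj p.1 p.2

/-- Two lists represent the same cyclic sequence, up to rotation and reflection. -/
def SameCycle (l l' : List V) : Prop :=
  ∃ n : ℕ, l'.rotate n = l ∨ l'.reverse.rotate n = l

/-- `u` and `v` are consecutive vertices (i.e. joined by an edge) of the cycle `l`. -/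
def CycAdj (l : List V) (u v : V) : Prop :=
  (u, v) ∈ l.zip (l.rotate 1) ∨ (v, u) ∈ l.zip (l.rotate 1)

/-- A combinatorial model of a plane graph. -/
structure PlaneGraph (V : Type) [Fintype V] [DecidableEq V] where
  /-- the underlying abstract simple graph -/
  G : SimpleGraph V
  /-- the faces, given by their boundary cycles -/
  faces : Set (List V)
  /-- the boundary cycle of the outer (unbounded) face -/
  outer : List V
  outer_mem : outer ∈ faces
  faces_cycle : ∀ l ∈ faces, IsCycleList G l
  /-- the set of vertices strictly inside a cycle -/
  inside : List V → Set V
  /-- the set of vertices strictly outside a cycle -/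
  outside : List V → Set V
  inside_outside_cover : ∀ l, IsCycleList G l → ∀ v : V,
    v ∈ inside l ∨ v ∈ outside l ∨ v ∈ l
  inside_outside_disjoint : ∀ l, Disjoint (inside l) (outside l)
  on_cycle_not_inside_outside : ∀ l, ∀ v ∈ l, v ∉ inside l ∧ v ∉ outside l
  no_edge_inside_outside : ∀ l, IsCycleList G l →
    ∀ u ∈ inside l, ∀ v ∈ outside l, ¬ G.Adj u v
  inner_face_inside_empty : ∀ l ∈ faces, ¬ SameCycle l outer → inside l = ∅
  outer_outside_empty : outside outer = ∅

namespace PlaneGraph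

/-- `l` is the boundary cycle of a face of `P` (up to rotation/reflection). -/
def IsFace (P : PlaneGraph V) (l : List V) : Prop :=
  ∃ l' ∈ P.faces, SameCycle l l'

/-- The degree of a vertex. -/
noncomputable def deg (P : PlaneGraph V) (v : V) : ℕ :=
  {u | P.G.Adj v u}.ncard

/-- A separating cycle: there are vertices strictly inside and strictly outside. -/
def Separating (P : PlaneGraph V) (l : List V) : Prop :=
  IsCycleList P.G l ∧ (P.inside l).Nonempty ∧ (P.outside l).Nonempty

end PlaneGraph

/-- `a`, `b`, `c` span a triangle of `G`. -/
def IsTriangle (G : SimpleGraph V) (a b c : V) : Prop :=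
  G.Adj a b ∧ G.Adj b c ∧ G.Adj c a

/-- `v` is incident to (i.e. lies on) some triangle of `G`. -/
def OnTriangle (G : SimpleGraph V) (v : V) : Prop :=
  ∃ a b : V, IsTriangle G v a b

/-- `G` contains no cycle of length 5. -/
def NoFiveCycle (G : SimpleGraph V) : Prop :=
  ∀ l : List V, IsCycleList G l → l.length ≠ 5

/-- No two distinct triangles of `G` share a vertex. -/
def NoIntersectingTriangles (G : SimpleGraph V) : Prop :=
  ∀ a b c d e f : V, IsTriangle G a b c → IsTriangle G d e f →
    (({a, b, c} : Set V) ∩ ({d, e, f} : Set V)).Nonempty →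
    ({a, b, c} : Set V) = ({d, e, f} : Set V)

/-- Membership in the family `𝒢` of plane graphs with no 5-cycles and no
two triangles sharing a vertex. -/
def PlaneGraph.InFamilyG (P : PlaneGraph V) : Prop :=
  NoFiveCycle P.G ∧ NoIntersectingTriangles P.G

/-- A (2,0,0)-coloring of `G`: color `0` induces a subgraph of maximum degree
at most `2`, and colors `1` and `2` induce independent sets. -/
def IsCol200 (G : SimpleGraph V) (c : V → Fin 3) : Prop :=
  (∀ u v : V, G.Adj u v → c u ≠ 0 → c u ≠ c v) ∧
  (∀ v : V, c v = 0 → {u | G.Adj v u ∧ c u = 0}.ncard ≤ 2)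

/-- A (2,0,0)-coloring of the cycle `l`, viewed as a subgraph. -/
def IsCol200Cycle (l : List V) (c : V → Fin 3) : Prop :=
  (∀ u v : V, CycAdj l u v → c u ≠ 0 → c u ≠ c v) ∧
  (∀ v ∈ l, c v = 0 → {u | CycAdj l u v ∧ c u = 0}.ncard ≤ 2)

/-- `c` agrees with `c₀` on the cycle `l` and every vertex off `l` receives a
color different from those of all of its neighbors on `l`. -/
def SuperextendsOn (G : SimpleGraph V) (l : List V) (c₀ c : V → Fin 3) : Prop :=
  (∀ v ∈ l, c v = c₀ v) ∧ ∀ v : V, v ∉ l → ∀ u ∈ l, G.Adj v u → c v ≠ c u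

/-- `(G, l)` is superextendable: every (2,0,0)-coloring of the cycle `l` extends to
a (2,0,0)-coloring of `G` in which every vertex off `l` gets a color different from
those of all of its neighbors on `l`. -/
def Superextendable (G : SimpleGraph V) (l : List V) : Prop :=
  ∀ c₀ : V → Fin 3, IsCol200Cycle l c₀ →
    ∃ c : V → Fin 3, IsCol200 G c ∧ SuperextendsOn G l c₀ c

/-- `σ(G) = |V(G)| + |E(G)|`. -/
noncomputable def PlaneGraph.sigma (P : PlaneGraph V) : ℕ :=
  Fintype.card V + P.G.edgeSet.ncard

/-- `(P, C₀)` is a counterexample to the main theorem that minimizes `σ`: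
`P` is a plane graph in `𝒢`, `C₀` is a triangle or a 7-cycle of `P`,
`(P, C₀)` is not superextendable, and every pair `(P', C')` of this kind with
smaller `σ` is superextendable. -/
def IsMinCex (P : PlaneGraph V) (C₀ : List V) : Prop :=
  P.InFamilyG ∧ IsCycleList P.G C₀ ∧ (C₀.length = 3 ∨ C₀.length = 7) ∧
  ¬ Superextendable P.G C₀ ∧
  ∀ (n : ℕ) (P' : PlaneGraph (Fin n)) (C' : List (Fin n)),
    P'.InFamilyG → IsCycleList P'.G C' → (C'.length = 3 ∨ C'.length = 7) →
    P'.sigma < P.sigma → Superextendable P'.G C'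

/-- The graph obtained from `G` by identifying the vertices `u` and `w` (the merged
vertex is `u`; the vertex `w` becomes isolated). -/
def identify (G : SimpleGraph V) (u w : V) : SimpleGraph V where
  Adj x y := x ≠ y ∧ x ≠ w ∧ y ≠ w ∧
    (G.Adj x y ∨ (x = u ∧ G.Adj w y) ∨ (y = u ∧ G.Adj x w))
  symm := by
    refine ⟨?_⟩
    rintro x y ⟨hxy, hxw, hyw, h⟩
    refine ⟨hxy.symm, hyw, hxw, ?_⟩
    rcases h with h | ⟨hx, h⟩ | ⟨hy, h⟩
    · exact Or.inl h.symm
    · exact Or.inr (Or.inr ⟨hx, h.symm⟩)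
    · exact Or.inr (Or.inl ⟨hy, h.symm⟩)
  loopless := by
    refine ⟨?_⟩
    rintro x ⟨hxx, -⟩
    exact hxx rfl

/-- The graph obtained from `G` by deleting the vertices of `S`
(the deleted vertices become isolated). -/
def delVerts (G : SimpleGraph V) (S : Set V) : SimpleGraph V where
  Adj x y := G.Adj x y ∧ x ∉ S ∧ y ∉ S
  symm := ⟨fun _ _ h => ⟨h.1.symm, h.2.2, h.2.1⟩⟩
  loopless := ⟨fun x h => G.loopless.irrefl x h.1⟩

/-- Base special 3-faces: `(3,3,5⁻)`-faces and `(3,4,4)`-faces disjoint from `C₀`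
(the first listed vertex is a 3-vertex). -/
def IsBaseSpecial (P : PlaneGraph V) (C₀ : List V) (u v w : V) : Prop :=
  P.IsFace [u, v, w] ∧ u ∉ C₀ ∧ v ∉ C₀ ∧ w ∉ C₀ ∧ P.deg u = 3 ∧
    ((P.deg v = 3 ∧ P.deg w ≤ 5) ∨ (P.deg v = 4 ∧ P.deg w = 4))

/-- Special 3-faces of rank at most `n`, following the paper's recursive
definition: the base special faces are the `(3,3,5⁻)`- and `(3,4,4)`-faces
disjoint from `C₀`; a `(3,5,5)`-face `uvw` (disjoint from `C₀`, with `d(u)=3`)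
is special of rank `n+1` when each off-face neighbor of each of its two
5-vertices is a 3-vertex lying on a pendant special 3-face of rank at most `n`,
i.e. the two 5-vertices have six pendant special 3-faces altogether. -/
def SpecialRank (P : PlaneGraph V) (C₀ : List V) : ℕ → V → V → V → Prop
  | 0 => fun u v w => IsBaseSpecial P C₀ u v w
  | n + 1 => fun u v w =>
      SpecialRank P C₀ n u v w ∨
      (P.IsFace [u, v, w] ∧ u ∉ C₀ ∧ v ∉ C₀ ∧ w ∉ C₀ ∧
        P.deg u = 3 ∧ P.deg v = 5 ∧ P.deg w = 5 ∧
        (∀ x : V, P.G.Adj v x → x ≠ u → x ≠ w →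
          ∃ a b c : V, SpecialRank P C₀ n a b c ∧ v ≠ a ∧ v ≠ b ∧ v ≠ c ∧
            (x = a ∨ x = b ∨ x = c) ∧ P.deg x = 3) ∧
        (∀ x : V, P.G.Adj w x → x ≠ u → x ≠ v →
          ∃ a b c : V, SpecialRank P C₀ n a b c ∧ w ≠ a ∧ w ≠ b ∧ w ≠ c ∧
            (x = a ∨ x = b ∨ x = c) ∧ P.deg x = 3))

/-- `uvw` is a special 3-face (of some rank). -/
def IsSpecial (P : PlaneGraph V) (C₀ : List V) (u v w : V) : Prop :=
  ∃ n : ℕ, SpecialRank P C₀ n u v w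

/-- The set `S` is the vertex set of a special 3-face. -/
def IsSpecialOn (P : PlaneGraph V) (C₀ : List V) (S : Set V) : Prop :=
  ∃ a b c : V, IsSpecial P C₀ a b c ∧ S = {a, b, c}

/-- `S` is the vertex set of a pendant special 3-face of `y`:  a special 3-face
not containing `y` one of whose 3-vertices is adjacent to `y`. -/
def PendantSpecial (P : PlaneGraph V) (C₀ : List V) (y : V) (S : Set V) : Prop :=
  IsSpecialOn P C₀ S ∧ y ∉ S ∧ ∃ x ∈ S, P.deg x = 3 ∧ P.G.Adj y x

/-- The number of pendant special 3-faces of `y`. -/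
noncomputable def pendCount (P : PlaneGraph V) (C₀ : List V) (y : V) : ℕ :=
  {S : Set V | PendantSpecial P C₀ y S}.ncard

/-!
Delete `u` and `v`. The graph `G - {u, v}` has fewer edges, so by minimality the precoloring of
`C₀` superextends to it; take such an extension with as few vertices of color `0` as possible.
Since `d(w) ≤ 5` and `d(u') ≤ 4`, both `w` and `u'` have at most three neighbours in
`G - {u, v}`, so if one of them has color `0` it has at most one neighbour of color `0`
(otherwise it could be recolored). Now `v` takes a color missing from `w` and its third
neighbour `v'`, and `u` takes color `0` unless all of `v, w, u'` have color `0` (then color `1`).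
This superextends the precoloring to `G`, a contradiction.
-/

variable {α β : Type}

section Triangles

variable {G : SimpleGraph α} {a b c : α}

lemma IsTriangle.rotate (h : IsTriangle G a b c) : IsTriangle G b c a :=
  ⟨h.2.1, h.2.2, h.1⟩

lemma IsTriangle.reverse (h : IsTriangle G a b c) : IsTriangle G c b a :=
  ⟨h.2.1.symm, h.1.symm, h.2.2.symm⟩

lemma IsCycleList.isTriangle (h : IsCycleList G [a, b, c]) : IsTriangle G a b c :=
  ⟨h.2.2 (a, b) (by simp [List.rotate]), h.2.2 (b, c) (by simp [List.rotate]),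
    h.2.2 (c, a) (by simp [List.rotate])⟩

lemma IsCycleList.isTriangle_of_sameCycle {l : List α} (hl : IsCycleList G l)
    (h : SameCycle [a, b, c] l) : IsTriangle G a b c := by
  obtain ⟨n, hn⟩ := h
  have hlen : l.length = 3 := by
    rcases hn with hn | hn <;> simpa using congrArg List.length hn
  obtain ⟨x, y, z, rfl⟩ := List.length_eq_three.1 hlen
  have hxyz := hl.isTriangle
  have hn3 : n % 3 < 3 := Nat.mod_lt _ (by norm_num)
  rcases hn with hn | hn <;> rw [← List.rotate_mod] at hn <;>
    interval_cases h : n % 3 <;> simp [h, List.rotate] at hn <;> obtain ⟨rfl, rfl, rfl⟩ := hn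
  exacts [hxyz, hxyz.rotate, hxyz.rotate.rotate,
    hxyz.reverse, hxyz.reverse.rotate, hxyz.reverse.rotate.rotate]

end Triangles

lemma PlaneGraph.isTriangle_of_isFace (P : PlaneGraph V) {a b c : V}
    (hf : P.IsFace [a, b, c]) : IsTriangle P.G a b c := by
  obtain ⟨l, hl, hs⟩ := hf
  exact (P.faces_cycle l hl).isTriangle_of_sameCycle hs

section Transport

variable {G : SimpleGraph α} {H : SimpleGraph β} {l : List α}

lemma zip_rotate_one_map (f : α → β) (l : List α) :
    (l.map f).zip ((l.map f).rotate 1) = (l.zip (l.rotate 1)).map (Prod.map f f) := by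
  rw [← List.map_rotate, List.zip_map]

lemma IsCycleList.map (f : G →g H) (hf : Function.Injective f) (h : IsCycleList G l) :
    IsCycleList H (l.map f) := by
  refine ⟨by simpa using h.1, h.2.1.map hf, fun p hp => ?_⟩
  rw [zip_rotate_one_map] at hp
  obtain ⟨⟨x, y⟩, hxy, rfl⟩ := List.mem_map.1 hp
  exact f.map_adj (h.2.2 _ hxy)

lemma NoFiveCycle.of_injective_hom (f : G →g H) (hf : Function.Injective f)
    (hH : NoFiveCycle H) : NoFiveCycle G := fun l hl => by
  simpa using hH _ (hl.map f hf)

lemma NoIntersectingTriangles.of_injective_hom (f : G →g H) (hf : Function.Injective f)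
    (hH : NoIntersectingTriangles H) : NoIntersectingTriangles G := by
  intro a b c d e g habc hdeg hne
  have himage : ∀ x y z : α, f '' {x, y, z} = {f x, f y, f z} := by
    simp [Set.image_insert_eq]
  have map_tri : ∀ {x y z : α}, IsTriangle G x y z → IsTriangle H (f x) (f y) (f z) :=
    fun hT => ⟨f.map_adj hT.1, f.map_adj hT.2.1, f.map_adj hT.2.2⟩
  obtain ⟨x, hx₁, hx₂⟩ := hne
  have key := hH _ _ _ _ _ _ (map_tri habc) (map_tri hdeg)
    ⟨f x, by simpa [himage] using Set.mem_image_of_mem f hx₁,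
      by simpa [himage] using Set.mem_image_of_mem f hx₂⟩
  rw [← himage, ← himage] at key
  exact hf.image_injective key

lemma cycAdj_map_iff (e : α ≃ β) {a b : α} : CycAdj (l.map e) (e a) (e b) ↔ CycAdj l a b := by
  have hinj : Function.Injective (Prod.map e e) := e.injective.prodMap e.injective
  simp only [CycAdj, zip_rotate_one_map]
  rw [← Prod.map_apply e e a b, ← Prod.map_apply e e b a, List.mem_map_of_injective hinj,
    List.mem_map_of_injective hinj]

lemma IsCol200Cycle.map (e : α ≃ β) {c : α → Fin 3} (h : IsCol200Cycle l c) :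
    IsCol200Cycle (l.map e) (c ∘ e.symm) := by
  refine ⟨fun x y hxy hx => ?_, fun x hx hx0 => ?_⟩
  · rw [← e.apply_symm_apply x, ← e.apply_symm_apply y, cycAdj_map_iff] at hxy
    exact h.1 _ _ hxy hx
  · obtain ⟨x, hxl, rfl⟩ := List.mem_map.1 hx
    have hset : {y | CycAdj (l.map e) y (e x) ∧ (c ∘ e.symm) y = 0} =
        e '' {z | CycAdj l z x ∧ c z = 0} := by
      ext y
      obtain ⟨y, rfl⟩ := e.surjective y
      simp [cycAdj_map_iff]
    rw [hset, Set.ncard_image_of_injective _ e.injective]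
    exact h.2 x hxl (by simpa using hx0)

lemma IsCol200.comp_hom [Finite β] (f : G →g H) (hf : Function.Injective f) {d : β → Fin 3}
    (hd : IsCol200 H d) : IsCol200 G (d ∘ f) := by
  refine ⟨fun x y hxy hx => hd.1 _ _ (f.map_adj hxy) hx, fun x hx => ?_⟩
  calc {y | G.Adj x y ∧ d (f y) = 0}.ncard
      = (f '' {y | G.Adj x y ∧ d (f y) = 0}).ncard := (Set.ncard_image_of_injective _ hf).symm
    _ ≤ {q | H.Adj (f x) q ∧ d q = 0}.ncard := by
        refine Set.ncard_le_ncard ?_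
        rintro _ ⟨y, ⟨hxy, hy⟩, rfl⟩
        exact ⟨f.map_adj hxy, hy⟩
    _ ≤ 2 := hd.2 _ hx

lemma Superextendable.of_iso [Finite β] (φ : G ≃g H)
    (h : Superextendable H (l.map φ)) : Superextendable G l := by
  intro c₀ hc₀
  obtain ⟨d, hd, hagree, hoff⟩ := h (c₀ ∘ φ.symm) (hc₀.map φ.toEquiv)
  refine ⟨d ∘ φ, hd.comp_hom φ.toEmbedding.toHom φ.injective, fun z hz => ?_,
    fun z hz x hx hzx => ?_⟩
  · simpa using hagree (φ z) (List.mem_map_of_mem hz)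
  · refine hoff (φ z) ?_ (φ x) (List.mem_map_of_mem hx) (φ.map_adj_iff.2 hzx)
    rwa [List.mem_map_of_injective φ.injective]

end Transport

/-- The combinatorial plane model constrains a graph only through its faces, so any graph with
a cycle `L` is a plane graph whose single face `L` is also the outer one. -/
def PlaneGraph.ofCycle (G : SimpleGraph V) (L : List V) (hL : IsCycleList G L) : PlaneGraph V where
  G := G
  faces := {L}
  outer := L
  outer_mem := rfl
  faces_cycle := by rintro l rfl; exact hL
  inside := fun l => {v | v ∉ l}
  outside := fun _ => ∅
  inside_outside_cover := fun l _ v => by by_cases hv : v ∈ l <;> simp [hv]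
  inside_outside_disjoint := fun _ => Set.disjoint_empty _
  on_cycle_not_inside_outside := fun _ _ hv => ⟨not_not_intro hv, id⟩
  no_edge_inside_outside := fun _ _ _ _ _ hv => hv.elim
  inner_face_inside_empty := by
    rintro l rfl hns
    exact absurd ⟨0, Or.inl (List.rotate_zero _)⟩ hns
  outer_outside_empty := rfl

lemma IsMinCex.superextendable_of_edgeSet_ssubset {P : PlaneGraph V} {C₀ : List V}
    (h : IsMinCex P C₀) {G' : SimpleGraph V} (hle : G' ≤ P.G) (hlt : G'.edgeSet ⊂ P.G.edgeSet)
    (hC₀ : IsCycleList G' C₀) : Superextendable G' C₀ := by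
  obtain ⟨⟨h5, h3⟩, -, hlen, -, hmin⟩ := h
  let e := G'.overFinIso (n := Fintype.card V) rfl
  let f : G'.overFin rfl →g P.G := (SimpleGraph.Hom.ofLE hle).comp e.symm.toEmbedding.toHom
  have hf : Function.Injective f := e.symm.injective
  have hC : IsCycleList (G'.overFin rfl) (C₀.map e) := hC₀.map e.toEmbedding.toHom e.injective
  refine Superextendable.of_iso e (hmin _ (PlaneGraph.ofCycle _ _ hC)
    _ ⟨h5.of_injective_hom f hf, h3.of_injective_hom f hf⟩ hC (by simpa using hlen) ?_)
  have hedges : (G'.overFin rfl).edgeSet.ncard = G'.edgeSet.ncard := by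
    rw [← Nat.card_coe_set_eq, ← Nat.card_coe_set_eq]
    exact Nat.card_congr e.symm.mapEdgeSet
  change Fintype.card (Fin _) + (G'.overFin rfl).edgeSet.ncard < Fintype.card V + _
  rw [Fintype.card_fin, hedges]
  exact Nat.add_lt_add_left (Set.ncard_lt_ncard hlt) _

lemma Set.exists_subset_triple_of_ncard_le_three [Finite α] {s : Set α} {a b : α}
    (hs : s.ncard ≤ 3) (ha : a ∈ s) (hb : b ∈ s) (hab : a ≠ b) : ∃ z, s ⊆ {a, b, z} := by
  have hsub : {a, b} ⊆ s := Set.insert_subset ha (Set.singleton_subset_iff.2 hb)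
  have hrest : (s \ {a, b}).ncard ≤ 1 := by
    have := Set.ncard_sdiff_add_ncard_of_subset hsub
    rw [Set.ncard_pair hab] at this
    omega
  have : Nonempty α := ⟨a⟩
  obtain ⟨z, hz⟩ := (Set.ncard_le_one_iff_subset_singleton (Set.toFinite _)).1 hrest
  refine ⟨z, fun y hy => ?_⟩
  by_cases hy' : y ∈ ({a, b} : Set α)
  · rcases hy' with rfl | rfl <;> simp
  · exact Or.inr (Or.inr (hz ⟨hy, hy'⟩))

section DeleteVertices

variable {G : SimpleGraph α} {S : Set α}

@[simp]
lemma delVerts_adj {a b : α} :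
    (delVerts G S).Adj a b ↔ G.Adj a b ∧ a ∉ S ∧ b ∉ S := Iff.rfl

lemma delVerts_le (G : SimpleGraph α) (S : Set α) : delVerts G S ≤ G := fun _ _ h => h.1

lemma delVerts_delVerts (S T : Set α) : delVerts (delVerts G S) T = delVerts G (S ∪ T) := by
  ext a b
  simp only [delVerts_adj, Set.mem_union]
  tauto

lemma IsCycleList.delVerts {l : List α} (h : IsCycleList G l) (hS : ∀ x ∈ l, x ∉ S) :
    IsCycleList (delVerts G S) l := by
  refine ⟨h.1, h.2.1, fun p hp => ⟨h.2.2 p hp, hS _ (List.of_mem_zip hp).1, hS _ ?_⟩⟩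
  exact List.mem_rotate.1 (List.of_mem_zip hp).2

lemma delVerts_edgeSet_ssubset {a b : α} (hab : G.Adj a b) (ha : a ∈ S) :
    (delVerts G S).edgeSet ⊂ G.edgeSet :=
  ⟨SimpleGraph.edgeSet_mono (delVerts_le G S), fun h =>
    (show (delVerts G S).Adj a b from h (show s(a, b) ∈ G.edgeSet from hab)).2.1 ha⟩

lemma ncard_adj_delVerts_add_le [Finite α] {T : Set α} {x : α} (hTS : T ⊆ S)
    (hT : T ⊆ {y | G.Adj x y}) :
    {y | (delVerts G S).Adj x y}.ncard + T.ncard ≤ {y | G.Adj x y}.ncard := by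
  rw [← Set.ncard_sdiff_add_ncard_of_subset hT]
  gcongr
  · exact Set.toFinite _
  · exact fun y hy => ⟨hy.1, fun hyT => hy.2.2 (hTS hyT)⟩

end DeleteVertices

section Coloring

variable {G H : SimpleGraph α} {c c₀ : α → Fin 3} {l : List α} {x : α} {k : Fin 3}

def zeroNbrs (G : SimpleGraph α) (c : α → Fin 3) (x : α) : Set α :=
  {y | G.Adj x y ∧ c y = 0}

lemma IsCol200.mono [Finite α] (hle : H ≤ G) (hc : IsCol200 G c) : IsCol200 H c :=
  ⟨fun a b hab => hc.1 a b (hle hab), fun a ha =>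
    (Set.ncard_le_ncard (t := zeroNbrs G c a) (fun _ hb => ⟨hle hb.1, hb.2⟩)).trans (hc.2 a ha)⟩

lemma SuperextendsOn.mono (hle : H ≤ G) (h : SuperextendsOn G l c₀ c) : SuperextendsOn H l c₀ c :=
  ⟨h.1, fun z hz y hy hzy => h.2 z hz y hy (hle hzy)⟩

lemma exists_ne_zero_forall_adj_ne [Finite α] (hdeg : {y | G.Adj x y}.ncard ≤ 3)
    (hzero : 2 ≤ (zeroNbrs G c x).ncard) : ∃ k ≠ 0, ∀ y, G.Adj x y → c y ≠ k := by
  by_contra! hall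
  obtain ⟨y₁, hy₁, hc₁⟩ := hall 1 (by decide)
  obtain ⟨y₂, hy₂, hc₂⟩ := hall 2 (by decide)
  have hy : y₁ ≠ y₂ := fun h => absurd (hc₁.symm.trans (h ▸ hc₂)) (by decide)
  have hdisj : Disjoint ({y₁, y₂} : Set α) (zeroNbrs G c x) := by
    rw [Set.disjoint_left]
    rintro y (rfl | rfl) ⟨-, hy0⟩
    · exact absurd (hc₁.symm.trans hy0) (by decide)
    · exact absurd (hc₂.symm.trans hy0) (by decide)
  have hsub : {y₁, y₂} ∪ zeroNbrs G c x ⊆ {y | G.Adj x y} := by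
    rintro y ((rfl | rfl) | ⟨hy, -⟩) <;> assumption
  have := Set.ncard_le_ncard hsub
  rw [Set.ncard_union_eq hdisj, Set.ncard_pair hy] at this
  omega

variable [DecidableEq α]

lemma SuperextendsOn.update (hx : x ∉ l) (hk : ∀ y ∈ l, G.Adj x y → c y ≠ k)
    (h : SuperextendsOn (delVerts G {x}) l c₀ c) :
    SuperextendsOn G l c₀ (Function.update c x k) := by
  have hne : ∀ y ∈ l, y ≠ x := fun y hy hyx => hx (hyx ▸ hy)
  refine ⟨fun y hy => ?_, fun z hz y hy hzy => ?_⟩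
  · rw [Function.update_of_ne (hne y hy)]
    exact h.1 y hy
  · rw [Function.update_of_ne (hne y hy)]
    by_cases hzx : z = x
    · subst hzx
      rw [Function.update_self]
      exact (hk y hy hzy).symm
    · rw [Function.update_of_ne hzx]
      exact h.2 z hz y hy ⟨hzy, hzx, hne y hy⟩

lemma zeroNbrs_update_subset (hk : ∀ y, G.Adj x y → c y ≠ k) {y : α} (hyx : y ≠ x)
    (hy : c y = 0) :
    zeroNbrs G (Function.update c x k) y ⊆ zeroNbrs (delVerts G {x}) c y := by
  rintro z ⟨hyz, hz⟩
  by_cases hzx : z = x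
  · subst hzx
    rw [Function.update_self] at hz
    exact absurd (hz ▸ hy) (hk y hyz.symm)
  · rw [Function.update_of_ne hzx] at hz
    exact ⟨⟨hyz, hyx, hzx⟩, hz⟩

lemma IsCol200.update_of_forall_adj_ne [Finite α] (hc : IsCol200 (delVerts G {x}) c)
    (hk : ∀ y, G.Adj x y → c y ≠ k) : IsCol200 G (Function.update c x k) := by
  refine ⟨fun a b hab ha => ?_, fun a ha => ?_⟩
  · by_cases hax : a = x
    · subst hax
      rw [Function.update_self, Function.update_of_ne hab.ne.symm]
      exact (hk b hab).symm
    rw [Function.update_of_ne hax] at ha ⊢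
    by_cases hbx : b = x
    · subst hbx
      rw [Function.update_self]
      exact hk a hab.symm
    · rw [Function.update_of_ne hbx]
      exact hc.1 a b ⟨hab, hax, hbx⟩ ha
  · by_cases hax : a = x
    · subst hax
      rw [Function.update_self] at ha
      subst ha
      have hempty : zeroNbrs G (Function.update c a 0) a = ∅ := by
        refine Set.eq_empty_of_forall_notMem fun y ⟨hay, hy⟩ => ?_
        rw [Function.update_of_ne hay.ne.symm] at hy
        exact hk y hay hy
      change (zeroNbrs G _ a).ncard ≤ 2
      simp [hempty]
    rw [Function.update_of_ne hax] at ha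
    exact (Set.ncard_le_ncard (zeroNbrs_update_subset hk hax ha)).trans (hc.2 a ha)

lemma IsCol200.update_zero [Finite α] (hc : IsCol200 (delVerts G {x}) c)
    (hdeg : (zeroNbrs G c x).ncard ≤ 2)
    (hnbr : ∀ y, G.Adj x y → c y = 0 → (zeroNbrs (delVerts G {x}) c y).ncard ≤ 1) :
    IsCol200 G (Function.update c x 0) := by
  refine ⟨fun a b hab ha => ?_, fun a ha => ?_⟩
  · have hax : a ≠ x := by rintro rfl; exact ha (Function.update_self ..)
    rw [Function.update_of_ne hax] at ha ⊢
    by_cases hbx : b = x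
    · subst hbx
      rwa [Function.update_self]
    · rw [Function.update_of_ne hbx]
      exact hc.1 a b ⟨hab, hax, hbx⟩ ha
  by_cases hax : a = x
  · subst hax
    have hset : zeroNbrs G (Function.update c a 0) a = zeroNbrs G c a := by
      ext y
      simp only [zeroNbrs, Set.mem_ofPred_eq]
      exact and_congr_right fun hay => by rw [Function.update_of_ne hay.ne.symm]
    change (zeroNbrs G _ a).ncard ≤ 2
    rwa [hset]
  rw [Function.update_of_ne hax] at ha
  have hsub : zeroNbrs G (Function.update c x 0) a ⊆ insert x (zeroNbrs (delVerts G {x}) c a) := by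
    rintro z ⟨haz, hz⟩
    by_cases hzx : z = x
    · exact Or.inl hzx
    · rw [Function.update_of_ne hzx] at hz
      exact Or.inr ⟨⟨haz, hax, hzx⟩, hz⟩
  by_cases hadj : G.Adj x a
  · calc (zeroNbrs G (Function.update c x 0) a).ncard
        ≤ (insert x (zeroNbrs (delVerts G {x}) c a)).ncard := Set.ncard_le_ncard hsub
      _ ≤ (zeroNbrs (delVerts G {x}) c a).ncard + 1 := Set.ncard_insert_le _ _
      _ ≤ 2 := by have := hnbr a hadj ha; omega
  · refine (Set.ncard_le_ncard (fun z hz => ?_)).trans (hc.2 a ha)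
    rcases hsub hz with rfl | hz'
    · exact absurd hz.1.symm hadj
    · exact hz'

/-- A superextension with the fewest vertices of color `0` has this property: otherwise recolor
such a vertex with a nonzero color absent from its neighbourhood. -/
lemma Superextendable.exists_zeroNbrs_le_one [Finite α] (h : Superextendable G l)
    (hc₀ : IsCol200Cycle l c₀) :
    ∃ c, IsCol200 G c ∧ SuperextendsOn G l c₀ c ∧ ∀ t ∉ l, {y | G.Adj t y}.ncard ≤ 3 →
      c t = 0 → (zeroNbrs G c t).ncard ≤ 1 := by
  obtain ⟨c, ⟨hc, hsup⟩, hmin⟩ := Set.exists_min_image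
    {c | IsCol200 G c ∧ SuperextendsOn G l c₀ c} (fun c => {v | c v = 0}.ncard)
    (Set.toFinite _) (h c₀ hc₀)
  refine ⟨c, hc, hsup, fun t ht hdeg ht0 => ?_⟩
  by_contra! hzero
  obtain ⟨k, hk0, hk⟩ := exists_ne_zero_forall_adj_ne hdeg hzero
  have hfewer : {v | Function.update c t k v = 0} ⊂ {v | c v = 0} := by
    refine Set.ssubset_iff_of_subset (fun v hv => ?_) |>.2 ⟨t, ht0, by simpa using hk0⟩
    by_cases hvt : v = t
    · subst hvt
      simp [hk0] at hv
    · rwa [Set.mem_ofPred_eq, Function.update_of_ne hvt] at hv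
  have := hmin (Function.update c t k)
    ⟨(hc.mono (delVerts_le G {t})).update_of_forall_adj_ne hk,
      (hsup.mono (delVerts_le G {t})).update ht fun y _ hy => hk y hy⟩
  exact absurd (Set.ncard_lt_ncard hfewer) (not_lt.2 this)

lemma exists_fin_three_ne_ne (a b : Fin 3) : ∃ k, k ≠ a ∧ k ≠ b := by
  revert a b; decide

lemma SuperextendsOn.exists_update_of_ncard_adj_le_three [Finite α] {u : α}
    (hdeg : {y | G.Adj u y}.ncard ≤ 3) (hu : u ∉ l) (hul : ∀ y ∈ l, ¬ G.Adj u y)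
    (hc : IsCol200 (delVerts G {u}) c) (hsup : SuperextendsOn (delVerts G {u}) l c₀ c)
    (hnbr : ∀ y, G.Adj u y → c y = 0 → (zeroNbrs (delVerts G {u}) c y).ncard ≤ 1) :
    ∃ c', IsCol200 G c' ∧ SuperextendsOn G l c₀ c' := by
  have hsup' : ∀ k, SuperextendsOn G l c₀ (Function.update c u k) :=
    fun k => hsup.update hu fun y hy huy => absurd huy (hul y hy)
  by_cases hall : ∀ y, G.Adj u y → c y = 0
  · refine ⟨Function.update c u 1, hc.update_of_forall_adj_ne fun y hy => ?_, hsup' 1⟩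
    rw [hall y hy]
    decide
  push Not at hall
  obtain ⟨y₀, hy₀, hy₀0⟩ := hall
  refine ⟨Function.update c u 0, hc.update_zero ?_ hnbr, hsup' 0⟩
  have hlt : zeroNbrs G c u ⊂ {y | G.Adj u y} :=
    (Set.ssubset_iff_of_subset fun y hy => hy.1).2 ⟨y₀, hy₀, fun hy => hy₀0 hy.2⟩
  have := Set.ncard_lt_ncard hlt
  omega

/-- After `v` takes a color missing from `w` and `v'`, every `0`-neighbour of `u` has at most one
further `0`-neighbour: for `w` and `u'` this is the zero-sparseness of the extension to
`G - {u, v}`, and if `v` has color `0` then `w` and `v'` do not. -/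
lemma Superextendable.of_delVerts_pair [Finite α] {u v w u' v' : α}
    (hdu : {y | G.Adj u y}.ncard ≤ 3)
    (hNu : {y | G.Adj u y} ⊆ {v, w, u'}) (hNv : {y | G.Adj v y} ⊆ {u, w, v'})
    (hu : u ∉ l) (hv : v ∉ l) (hw : w ∉ l) (hu' : u' ∉ l)
    (hdw : {y | (delVerts G {u, v}).Adj w y}.ncard ≤ 3)
    (hdu' : {y | (delVerts G {u, v}).Adj u' y}.ncard ≤ 3)
    (h : Superextendable (delVerts G {u, v}) l) : Superextendable G l := by
  intro c₀ hc₀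
  obtain ⟨c, hc, hsup, hsparse⟩ := h.exists_zeroNbrs_le_one hc₀
  rw [← Set.singleton_union, ← delVerts_delVerts] at hc hsup hsparse hdw hdu'
  obtain ⟨kv, hkw, hkv'⟩ := exists_fin_three_ne_ne (c w) (c v')
  have hkv : ∀ y, (delVerts G {u}).Adj v y → c y ≠ kv := by
    rintro y ⟨hvy, -, hyu⟩
    rcases hNv hvy with rfl | rfl | rfl
    exacts [absurd rfl hyu, hkw.symm, hkv'.symm]
  refine SuperextendsOn.exists_update_of_ncard_adj_le_three hdu hu (fun y hy huy => ?_)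
    (hc.update_of_forall_adj_ne hkv) (hsup.update hv fun y _ hy => hkv y hy) fun y huy hy0 => ?_
  · rcases hNu huy with rfl | rfl | rfl <;> contradiction
  by_cases hyv : y = v
  · subst hyv
    suffices zeroNbrs (delVerts G {u}) (Function.update c y kv) y = ∅ by simp [this]
    refine Set.eq_empty_of_forall_notMem fun z ⟨hyz, hz⟩ => ?_
    rw [Function.update_self] at hy0
    rw [Function.update_of_ne hyz.ne.symm] at hz
    exact hkv z hyz (hz.trans hy0.symm)
  rw [Function.update_of_ne hyv] at hy0
  have hy : y ∉ l ∧ {z | (delVerts (delVerts G {u}) {v}).Adj y z}.ncard ≤ 3 := by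
    rcases hNu huy with rfl | rfl | rfl
    exacts [absurd rfl hyv, ⟨hw, hdw⟩, ⟨hu', hdu'⟩]
  exact (Set.ncard_le_ncard (zeroNbrs_update_subset hkv hyv hy0)).trans
    (hsparse y hy.1 hy.2 hy0)

end Coloring

theorem mincex_335_face_pendant_neighbor_degree_general
    (P : PlaneGraph V) (C₀ : List V) (h : IsMinCex P C₀)
    (u v w u' : V) (hf : P.IsFace [u, v, w])
    (hdu : P.deg u = 3) (hdv : P.deg v = 3) (hdw : P.deg w ≤ 5)
    (hadj : P.G.Adj u u') (hne1 : u' ≠ v) (hne2 : u' ≠ w)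
    (hC : u ∉ C₀ ∧ v ∉ C₀ ∧ w ∉ C₀ ∧ u' ∉ C₀) :
    5 ≤ P.deg u' := by
  obtain ⟨hCu, hCv, hCw, hCu'⟩ := hC
  obtain ⟨huv, hvw, hwu⟩ := P.isTriangle_of_isFace hf
  by_contra! hdu'
  obtain ⟨z, hNu⟩ := Set.exists_subset_triple_of_ncard_le_three hdu.le huv hwu.symm hvw.ne
  have hz : z = u' := by
    rcases hNu hadj with h | h | h
    exacts [absurd h hne1, absurd h hne2, h.symm]
  rw [hz] at hNu
  obtain ⟨v', hNv⟩ := Set.exists_subset_triple_of_ncard_le_three hdv.le huv.symm hvw hwu.ne'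
  have hsmaller : Superextendable (delVerts P.G {u, v}) C₀ :=
    h.superextendable_of_edgeSet_ssubset (delVerts_le _ _)
      (delVerts_edgeSet_ssubset huv (Set.mem_insert u {v}))
      (h.2.1.delVerts fun x hx hxS => by rcases hxS with rfl | rfl <;> contradiction)
  refine h.2.2.2.1 (hsmaller.of_delVerts_pair hdu.le hNu hNv hCu hCv hCw hCu' ?_ ?_)
  · have := ncard_adj_delVerts_add_le (G := P.G) (x := w) subset_rfl
      (Set.insert_subset hwu (Set.singleton_subset_iff.2 hvw.symm))
    rw [Set.ncard_pair huv.ne] at this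
    exact Nat.le_of_add_le_add_right (this.trans (hdw.trans (by norm_num)))
  · have := ncard_adj_delVerts_add_le (G := P.G) (x := u') (Set.singleton_subset_iff.2
      (Set.mem_insert u {v})) (Set.singleton_subset_iff.2 hadj.symm)
    rw [Set.ncard_singleton] at this
    change _ + 1 ≤ P.deg u' at this
    omega

/-- In the minimal counterexample `(G, C₀)` (with `C₀` bounding the
outer face), let `f = uvw` be a 3-face with `d(u) = d(v) = 3` and `d(w) ≤ 5`, and
let `u'` be the pendant neighbor of `u`.  If `(b(f) ∪ {u'}) ∩ C₀ = ∅`, then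
`d(u') ≥ 5`. -/
theorem mincex_335_face_pendant_neighbor_degree
    (P : PlaneGraph V) (C₀ : List V) (h : IsMinCex P C₀)
    (houter : SameCycle C₀ P.outer)
    (u v w u' : V) (hf : P.IsFace [u, v, w])
    (hdu : P.deg u = 3) (hdv : P.deg v = 3) (hdw : P.deg w ≤ 5)
    (hadj : P.G.Adj u u') (hne1 : u' ≠ v) (hne2 : u' ≠ w)
    (hC : u ∉ C₀ ∧ v ∉ C₀ ∧ w ∉ C₀ ∧ u' ∉ C₀) :
    5 ≤ P.deg u' :=
  mincex_335_face_pendant_neighbor_degree_general P C₀ h u v w u' hf hdu hdv hdw hadj hne1 hne2 hC
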